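/- arXiv:2112.13270 — 5 statements merged into one kernel-verified Lean document; each statement's English description precedes it below -/
import Mathlib

section
/- Let α be a unit-speed curve in ℝ³ with curvature κ > 0 and torsion τ ≠ 0, both differentiable, and let λ ≠ 0. Define the vector field d(s) = (t + λn + (1+λ²)(κ/τ)b) / √((1+λ²)²(κ/τ)² + (1+λ²)). If the intrinsic equation τ = (1+λ²)(τ/κ)' / (λ(1 + λ² + (τ/κ)²)) holds, then d'(s) = 0, i.e., d is a constant vector. -/
/-!
Write `c = 1 + λ²`, `ρ = κ/τ`, `V = t + λn + cρb` and `g = √(c²ρ² + c)`, so that `d = V / g`.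
The Frenet equations give `V' = -λκ t - λ²κ n + (λτ + cρ')b`, and the intrinsic equation is
exactly `λτ + cρ' = -λκ cρ`; hence `V' = -λκ V`. The same identity gives `g' = -λκ g`, so `V` and
`g` have the same logarithmic derivative and their quotient is constant.
-/

section
variable {E : Type*} [NormedAddCommGroup E] [NormedSpace ℝ E]

theorem HasDerivAt.inv_smul_eq_zero_of_deriv_eq_smul {g : ℝ → ℝ} {V : ℝ → E} {μ s : ℝ}
    (hg : HasDerivAt g (μ * g s) s) (hgs : g s ≠ 0) (hV : HasDerivAt V (μ • V s) s) :
    HasDerivAt (fun u => (g u)⁻¹ • V u) 0 s := by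
  refine ((hg.inv hgs).smul hV).congr_deriv ?_
  match_scalars
  simp only [Pi.inv_apply]
  field_simp
  ring

theorem hasDerivAt_frenet_combination {T N B : ℝ → E} {f : ℝ → ℝ} {κ τ f' s : ℝ} (a : ℝ)
    (hT : HasDerivAt T (κ • N s) s) (hN : HasDerivAt N (-κ • T s + τ • B s) s)
    (hB : HasDerivAt B (-τ • N s) s) (hf : HasDerivAt f f' s) :
    HasDerivAt (fun u => T u + a • N u + f u • B u)
      ((-(a * κ)) • T s + (κ - f s * τ) • N s + (a * τ + f') • B s) s := by
  refine ((hT.add (hN.const_smul a)).add (hf.smul hB)).congr_deriv ?_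
  module

end

theorem HasDerivAt.sqrt_of_deriv_eq_mul {q : ℝ → ℝ} {μ s : ℝ} (hq : HasDerivAt q (2 * μ * q s) s)
    (hqs : 0 < q s) : HasDerivAt (fun u => √(q u)) (μ * √(q s)) s := by
  refine (hq.sqrt hqs.ne').congr_deriv ?_
  have hsq : √(q s) ^ 2 = q s := Real.sq_sqrt hqs.le
  field_simp
  linear_combination (-μ) * hsq

theorem intrinsic_equation_in_inverse_ratio {κ τ r' lam : ℝ} (hκ : κ ≠ 0) (hτ : τ ≠ 0)
    (hlam : lam ≠ 0) (h : τ = (1 + lam ^ 2) * r' / (lam * (1 + lam ^ 2 + (τ / κ) ^ 2))) :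
    lam * τ + (1 + lam ^ 2) * (-r' / (τ / κ) ^ 2) = -(lam * κ) * ((1 + lam ^ 2) * (κ / τ)) := by
  have hpos : 0 < 1 + lam ^ 2 + (τ / κ) ^ 2 := by positivity
  field_simp at h ⊢
  linear_combination h

theorem whirl_axis_constant_general
    (I : Set ℝ) (T N B : ℝ → EuclideanSpace ℝ (Fin 3)) (κ τ r' : ℝ → ℝ) (lam : ℝ)
    (hκ : ∀ s ∈ I, 0 < κ s) (hτ : ∀ s ∈ I, τ s ≠ 0) (hlam : lam ≠ 0)
    (hT : ∀ s ∈ I, HasDerivAt T (κ s • N s) s)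
    (hN : ∀ s ∈ I, HasDerivAt N (-(κ s) • T s + τ s • B s) s)
    (hB : ∀ s ∈ I, HasDerivAt B (-(τ s) • N s) s)
    (hratio : ∀ s ∈ I, HasDerivAt (fun u => τ u / κ u) (r' s) s)
    (hintrinsic : ∀ s ∈ I,
      τ s = (1 + lam ^ 2) * r' s / (lam * (1 + lam ^ 2 + (τ s / κ s) ^ 2))) :
    ∀ s ∈ I, HasDerivAt
      (fun u => (Real.sqrt ((1 + lam ^ 2) ^ 2 * (κ u / τ u) ^ 2 + (1 + lam ^ 2)))⁻¹ •
        (T u + lam • N u + ((1 + lam ^ 2) * (κ u / τ u)) • B u))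
      (0 : EuclideanSpace ℝ (Fin 3)) s := by
  intro s hs
  have hκs := (hκ s hs).ne'
  have hτs := hτ s hs
  have hρ : HasDerivAt (fun u => κ u / τ u) (-r' s / (τ s / κ s) ^ 2) s := by
    simpa only [Pi.inv_def, inv_div] using (hratio s hs).inv (div_ne_zero hτs hκs)
  have hcoeff := intrinsic_equation_in_inverse_ratio hκs hτs hlam (hintrinsic s hs)
  have hV := hasDerivAt_frenet_combination lam (hT s hs) (hN s hs) (hB s hs)
    (hρ.const_mul (1 + lam ^ 2))
  have hg : HasDerivAt (fun u => √((1 + lam ^ 2) ^ 2 * (κ u / τ u) ^ 2 + (1 + lam ^ 2)))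
      (-(lam * κ s) * √((1 + lam ^ 2) ^ 2 * (κ s / τ s) ^ 2 + (1 + lam ^ 2))) s := by
    refine HasDerivAt.sqrt_of_deriv_eq_mul ?_ (by positivity)
    refine (((hρ.pow 2).const_mul _).add_const _).congr_deriv ?_
    norm_num
    field_simp at hcoeff ⊢
    linear_combination hcoeff
  refine hg.inv_smul_eq_zero_of_deriv_eq_smul (by positivity) (hV.congr_deriv ?_)
  rw [hcoeff]
  match_scalars
  · ring
  · field_simp
    ring
  · ring

/-- if the intrinsic equation `τ = (1+λ²)(τ/κ)'/(λ(1+λ²+(τ/κ)²))`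
holds, then the vector field
`d(s) = (T + λN + (1+λ²)(κ/τ)B)/√((1+λ²)²(κ/τ)² + (1+λ²))` has zero derivative,
i.e. it is constant. -/
theorem whirl_axis_constant
    (I : Set ℝ) (T N B : ℝ → EuclideanSpace ℝ (Fin 3)) (κ τ r' : ℝ → ℝ) (lam : ℝ)
    (hI : IsOpen I)
    (hκ : ∀ s ∈ I, 0 < κ s) (hτ : ∀ s ∈ I, τ s ≠ 0) (hlam : lam ≠ 0)
    (hT : ∀ s ∈ I, HasDerivAt T (κ s • N s) s)
    (hN : ∀ s ∈ I, HasDerivAt N (-(κ s) • T s + τ s • B s) s)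
    (hB : ∀ s ∈ I, HasDerivAt B (-(τ s) • N s) s)
    (hratio : ∀ s ∈ I, HasDerivAt (fun u => τ u / κ u) (r' s) s)
    (hintrinsic : ∀ s ∈ I,
      τ s = (1 + lam ^ 2) * r' s / (lam * (1 + lam ^ 2 + (τ s / κ s) ^ 2))) :
    ∀ s ∈ I, HasDerivAt
      (fun u => (Real.sqrt ((1 + lam ^ 2) ^ 2 * (κ u / τ u) ^ 2 + (1 + lam ^ 2)))⁻¹ •
        (T u + lam • N u + ((1 + lam ^ 2) * (κ u / τ u)) • B u))
      (0 : EuclideanSpace ℝ (Fin 3)) s :=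
  whirl_axis_constant_general I T N B κ τ r' lam hκ hτ hlam hT hN hB hratio hintrinsic
end

section
/- Let κ : I → ℝ be continuous and positive, λ ≠ 0, B ∈ ℝ, and suppose λ∫_{s₀}^s κ < B on I. Then the function τ(s) := √(1+λ²) · κ(s) · e^{λ∫_{s₀}^s κ - B} / √(1 - e^{2(λ∫_{s₀}^s κ - B)}) together with κ satisfies the intrinsic equation (1+λ²)(τ/κ)'(s) = λ τ(s) (1 + λ² + (τ(s)/κ(s))²) for all s ∈ I (assuming κ is differentiable wherever needed). -/
/-- with `τ(s) = √(1+λ²)·κ(s)·E(s)/√(1-E(s)²)` where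
`E(s) = exp(λ∫_{s₀}^s κ − B)`, the pair `(κ, τ)` satisfies the intrinsic equation
`(1+λ²)(τ/κ)'(s) = λ τ(s)(1+λ²+(τ(s)/κ(s))²)`. -/
theorem intrinsic_equation_of_constructed_torsion
    (I : Set ℝ) (s₀ : ℝ) (hs₀ : s₀ ∈ I) (hI : IsOpen I) (hconn : Convex ℝ I)
    (κ τ : ℝ → ℝ) (lam B : ℝ)
    (hlam : lam ≠ 0)
    (hκc : ContinuousOn κ I) (hκd : ∀ s ∈ I, DifferentiableAt ℝ κ s)
    (hκ : ∀ s ∈ I, 0 < κ s)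
    (hB : ∀ s ∈ I, lam * ∫ u in s₀..s, κ u < B)
    (hτ : ∀ s, τ s = Real.sqrt (1 + lam ^ 2) * κ s *
        Real.exp (lam * (∫ u in s₀..s, κ u) - B) /
        Real.sqrt (1 - Real.exp (lam * (∫ u in s₀..s, κ u) - B) ^ 2)) :
    ∀ s ∈ I, HasDerivAt (fun u => τ u / κ u)
      (lam * τ s * (1 + lam ^ 2 + (τ s / κ s) ^ 2) / (1 + lam ^ 2)) s := by
  intro s hs
  set F : ℝ → ℝ := fun u => lam * (∫ u' in s₀..u, κ u') - B with hFdef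
  -- derivative of F
  have hintd : HasDerivAt (fun u => ∫ u' in s₀..u, κ u') (κ s) s := by
    apply intervalIntegral.integral_hasDerivAt_right
    · exact (hκc.mono (hconn.ordConnected.uIcc_subset hs₀ hs)).intervalIntegrable
    · exact hκc.stronglyMeasurableAtFilter hI s hs
    · exact (hκc s hs).continuousAt (hI.mem_nhds hs)
  have hFd : HasDerivAt F (lam * κ s) s := (hintd.const_mul lam).sub_const B
  set e : ℝ := Real.exp (F s) with hedef
  have he0 : 0 < e := Real.exp_pos _
  have he1 : e < 1 := Real.exp_lt_one_iff.mpr (by simp only [hFdef]; linarith [hB s hs])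
  have h1e : 0 < 1 - e ^ 2 := by nlinarith
  have hsq : 0 < Real.sqrt (1 - e ^ 2) := Real.sqrt_pos.mpr h1e
  have hL : (0:ℝ) < 1 + lam ^ 2 := by positivity
  have hEd : HasDerivAt (fun u => Real.exp (F u)) (e * (lam * κ s)) s := hFd.exp
  have hden : HasDerivAt (fun u => 1 - Real.exp (F u) ^ 2)
      (-(2 * e ^ 1 * (e * (lam * κ s)))) s := ((hEd.pow 2).const_sub 1).congr_deriv (by ring)
  have hdsq : HasDerivAt (fun u => Real.sqrt (1 - Real.exp (F u) ^ 2))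
      (-(2 * e ^ 1 * (e * (lam * κ s))) / (2 * Real.sqrt (1 - e ^ 2))) s :=
    hden.sqrt (ne_of_gt h1e)
  have hnum : HasDerivAt (fun u => Real.sqrt (1 + lam ^ 2) * Real.exp (F u))
      (Real.sqrt (1 + lam ^ 2) * (e * (lam * κ s))) s := hEd.const_mul _
  have hg : HasDerivAt
      (fun u => Real.sqrt (1 + lam ^ 2) * Real.exp (F u) / Real.sqrt (1 - Real.exp (F u) ^ 2))
      ((Real.sqrt (1 + lam ^ 2) * (e * (lam * κ s)) * Real.sqrt (1 - e ^ 2) -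
        Real.sqrt (1 + lam ^ 2) * e *
          (-(2 * e ^ 1 * (e * (lam * κ s))) / (2 * Real.sqrt (1 - e ^ 2)))) /
        (Real.sqrt (1 - e ^ 2)) ^ 2) s := hnum.div hdsq (ne_of_gt hsq)
  have heq : (fun u => τ u / κ u) =ᶠ[nhds s]
      (fun u => Real.sqrt (1 + lam ^ 2) * Real.exp (F u) / Real.sqrt (1 - Real.exp (F u) ^ 2)) := by
    filter_upwards [hI.mem_nhds hs] with u hu
    have hκu : κ u ≠ 0 := ne_of_gt (hκ u hu)
    have heu1 : Real.exp (F u) < 1 := Real.exp_lt_one_iff.mpr (by simp only [hFdef]; linarith [hB u hu])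
    have h1eu : 0 < 1 - Real.exp (F u) ^ 2 := by nlinarith [Real.exp_pos (F u)]
    have hsqu : Real.sqrt (1 - Real.exp (F u) ^ 2) ≠ 0 := ne_of_gt (Real.sqrt_pos.mpr h1eu)
    rw [hτ u]
    simp only [hFdef]
    field_simp
  have hτs : τ s = Real.sqrt (1 + lam ^ 2) * κ s * e / Real.sqrt (1 - e ^ 2) := hτ s
  have key : (Real.sqrt (1 + lam ^ 2) * (e * (lam * κ s)) * Real.sqrt (1 - e ^ 2) -
        Real.sqrt (1 + lam ^ 2) * e *
          (-(2 * e ^ 1 * (e * (lam * κ s))) / (2 * Real.sqrt (1 - e ^ 2)))) /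
        (Real.sqrt (1 - e ^ 2)) ^ 2 =
      lam * τ s * (1 + lam ^ 2 + (τ s / κ s) ^ 2) / (1 + lam ^ 2) := by
    have hs1 : Real.sqrt (1 - e ^ 2) ^ 2 = 1 - e ^ 2 := Real.sq_sqrt h1e.le
    have hs2 : Real.sqrt (1 + lam ^ 2) ^ 2 = 1 + lam ^ 2 := Real.sq_sqrt hL.le
    have hκs : κ s ≠ 0 := ne_of_gt (hκ s hs)
    set a := Real.sqrt (1 + lam ^ 2) with ha
    set c := Real.sqrt (1 - e ^ 2) with hc
    have ha0 : a ≠ 0 := ne_of_gt (Real.sqrt_pos.mpr hL)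
    have hc0 : c ≠ 0 := ne_of_gt hsq
    rw [hτs, ← hs2]
    field_simp
    ring
  rw [← key]
  exact hg.congr_of_eventuallyEq heq
end

section
/- Let λ ≠ 0 and let κ : I → ℝ be positive and differentiable with λ∫_{s₀}^s κ < B. Writing E(s) = e^{λ∫_{s₀}^s κ - B}, the following antiderivative identity holds: d/ds [ arctan(√(1 - E(s)²)/λ) - (1/λ) arctanh(√(1 - E(s)²)) ] = (1+λ²) κ(s) √(1 - E(s)²) / (1 + λ² - E(s)²). -/
/-!
`E` solves `E' = λ κ E`, so `q = √(1 - E²)` satisfies `q' = -λ κ E² / q = -λ κ (1 - q²) / q`.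
On the other hand `φ(q) = arctan (q / λ) - artanh q / λ` has
`φ'(q) = -(1 + λ²) q² / (λ (λ² + q²) (1 - q²))`, so in `(φ ∘ q)'` the factors `λ` and `1 - q²`
cancel, and `λ² + q² = 1 + λ² - E²`.
-/

/-- Inverse hyperbolic tangent. -/
noncomputable def artanh (x : ℝ) : ℝ := Real.log ((1 + x) / (1 - x)) / 2

lemma hasDerivAt_artanh {x : ℝ} (h₁ : -1 < x) (h₂ : x < 1) :
    HasDerivAt artanh (1 / (1 - x ^ 2)) x := by
  have h₁' : 0 < 1 + x := by linarith
  have h₂' : 0 < 1 - x := by linarith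
  have hquot := ((hasDerivAt_id x).const_add 1).div ((hasDerivAt_id x).const_sub 1) h₂'.ne'
  refine ((hquot.log (div_pos h₁' h₂').ne').div_const 2).congr_deriv ?_
  have : 1 - x ^ 2 ≠ 0 := by nlinarith
  simp only [id, Pi.div_apply]
  field_simp
  ring

lemma hasDerivAt_arctan_div_sub_artanh_div {lam q : ℝ} (hlam : lam ≠ 0)
    (h₁ : -1 < q) (h₂ : q < 1) :
    HasDerivAt (fun x => Real.arctan (x / lam) - artanh x / lam)
      (-((1 + lam ^ 2) * q ^ 2) / (lam * (lam ^ 2 + q ^ 2) * (1 - q ^ 2))) q := by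
  refine (((Real.hasDerivAt_arctan (q / lam)).comp q ((hasDerivAt_id q).div_const lam)).sub
    ((hasDerivAt_artanh h₁ h₂).div_const lam)).congr_deriv ?_
  have : lam ^ 2 + q ^ 2 ≠ 0 := by positivity
  have : 1 - q ^ 2 ≠ 0 := by nlinarith
  field_simp
  ring

lemma hasDerivAt_arctan_sqrt_div_sub_artanh_sqrt_div {E : ℝ → ℝ} {lam k s : ℝ} (hlam : lam ≠ 0)
    (hE : HasDerivAt E (lam * k * E s) s) (hpos : 0 < E s) (hlt : E s < 1) :
    HasDerivAt (fun u => Real.arctan (√(1 - E u ^ 2) / lam) - artanh √(1 - E u ^ 2) / lam)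
      ((1 + lam ^ 2) * k * √(1 - E s ^ 2) / (1 + lam ^ 2 - E s ^ 2)) s := by
  have hQ : 0 < 1 - E s ^ 2 := by nlinarith
  have hq_pos : 0 < √(1 - E s ^ 2) := Real.sqrt_pos.2 hQ
  have hq_sq : √(1 - E s ^ 2) ^ 2 = 1 - E s ^ 2 := Real.sq_sqrt hQ.le
  have hsqrt : HasDerivAt (fun u => √(1 - E u ^ 2))
      (-(lam * k * E s ^ 2) / √(1 - E s ^ 2)) s := by
    refine (((hE.pow 2).const_sub 1).sqrt hQ.ne').congr_deriv ?_
    simp only [Pi.pow_apply]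
    field_simp
    ring
  refine ((hasDerivAt_arctan_div_sub_artanh_div hlam (by linarith) (by nlinarith)).comp s
    hsqrt).congr_deriv ?_
  have : 1 + lam ^ 2 - E s ^ 2 ≠ 0 := by nlinarith [sq_pos_of_ne_zero hlam]
  rw [hq_sq, show lam ^ 2 + (1 - E s ^ 2) = 1 + lam ^ 2 - E s ^ 2 by ring, sub_sub_cancel]
  field_simp
  linear_combination (-k) * hq_sq

theorem theta_antiderivative_general
    (I : Set ℝ) (s₀ : ℝ) (hs₀ : s₀ ∈ I) (hI : IsOpen I) (hconn : Convex ℝ I)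
    (κ : ℝ → ℝ) (lam B : ℝ) (hlam : lam ≠ 0)
    (hκc : ContinuousOn κ I)
    (hB : ∀ s ∈ I, lam * ∫ u in s₀..s, κ u < B)
    (E : ℝ → ℝ)
    (hE : ∀ s, E s = Real.exp (lam * (∫ u in s₀..s, κ u) - B)) :
    ∀ s ∈ I, HasDerivAt
      (fun u => Real.arctan (Real.sqrt (1 - E u ^ 2) / lam) -
        artanh (Real.sqrt (1 - E u ^ 2)) / lam)
      ((1 + lam ^ 2) * κ s * Real.sqrt (1 - E s ^ 2) / (1 + lam ^ 2 - E s ^ 2)) s := by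
  intro s hs
  have hint : HasDerivAt (fun u => ∫ t in s₀..u, κ t) (κ s) s :=
    intervalIntegral.integral_hasDerivAt_right
      (hκc.mono (hconn.ordConnected.uIcc_subset hs₀ hs)).intervalIntegrable
      (hκc.stronglyMeasurableAtFilter hI s hs) (hκc.continuousAt (hI.mem_nhds hs))
  have hE' : HasDerivAt E (lam * κ s * E s) s := by
    rw [funext hE]
    exact ((hint.const_mul lam).sub_const B).exp.congr_deriv (mul_comm _ _)
  refine hasDerivAt_arctan_sqrt_div_sub_artanh_sqrt_div hlam hE' ?_ ?_
  · rw [hE]; exact Real.exp_pos _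
  · rw [hE]; exact Real.exp_lt_one_iff.2 (by linarith [hB s hs])

/-- with `E(s) = exp(λ∫_{s₀}^s κ − B)`,
`d/ds [arctan(√(1-E²)/λ) − (1/λ)artanh(√(1-E²))] = (1+λ²)κ√(1-E²)/(1+λ²-E²)`. -/
theorem theta_antiderivative
    (I : Set ℝ) (s₀ : ℝ) (hs₀ : s₀ ∈ I) (hI : IsOpen I) (hconn : Convex ℝ I)
    (κ : ℝ → ℝ) (lam B : ℝ) (hlam : lam ≠ 0)
    (hκc : ContinuousOn κ I) (hκd : ∀ s ∈ I, DifferentiableAt ℝ κ s)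
    (hκ : ∀ s ∈ I, 0 < κ s)
    (hB : ∀ s ∈ I, lam * ∫ u in s₀..s, κ u < B)
    (E : ℝ → ℝ)
    (hE : ∀ s, E s = Real.exp (lam * (∫ u in s₀..s, κ u) - B)) :
    ∀ s ∈ I, HasDerivAt
      (fun u => Real.arctan (Real.sqrt (1 - E u ^ 2) / lam) -
        artanh (Real.sqrt (1 - E u ^ 2)) / lam)
      ((1 + lam ^ 2) * κ s * Real.sqrt (1 - E s ^ 2) / (1 + lam ^ 2 - E s ^ 2)) s :=
  theta_antiderivative_general I s₀ hs₀ hI hconn κ lam B hlam hκc hB E hE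
end

section
/- Let σ : I → ℝ³ be a unit-speed curve with curvature κ > 0 and torsion τ. If the ratio τ/κ is a nonconstant linear function of arclength, τ(s)/κ(s) = c₁s + c₂ with c₁ ≠ 0, then there is a translate σ̃ of σ such that ⟨σ̃(s), n(s)⟩ = 0 for all s, i.e. σ is congruent to a rectifying curve. -/
/-- Chen's characterization, sufficiency: if the ratio of torsion
to curvature of a unit-speed curve is a nonconstant linear function of
arclength, `τ/κ = c₁ s + c₂` with `c₁ ≠ 0`, then some translate `σ̃ = σ + v` of
the curve is rectifying: `⟨σ̃(s), n(s)⟩ = 0` for all `s`. -/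
theorem linear_ratio_implies_rectifying
    (a₀ b₀ : ℝ) (hab : a₀ < b₀)
    (σ T N B : ℝ → EuclideanSpace ℝ (Fin 3)) (κ τ : ℝ → ℝ) (c₁ c₂ : ℝ)
    (hc₁ : c₁ ≠ 0)
    (hκ : ∀ s ∈ Set.Ioo a₀ b₀, 0 < κ s)
    (hσ : ∀ s ∈ Set.Ioo a₀ b₀, HasDerivAt σ (T s) s)
    (hTn : ∀ s ∈ Set.Ioo a₀ b₀, ‖T s‖ = 1)
    (hNn : ∀ s ∈ Set.Ioo a₀ b₀, ‖N s‖ = 1)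
    (hBn : ∀ s ∈ Set.Ioo a₀ b₀, ‖B s‖ = 1)
    (hTN : ∀ s ∈ Set.Ioo a₀ b₀, (inner ℝ (T s) (N s) : ℝ) = 0)
    (hTB : ∀ s ∈ Set.Ioo a₀ b₀, (inner ℝ (T s) (B s) : ℝ) = 0)
    (hNB : ∀ s ∈ Set.Ioo a₀ b₀, (inner ℝ (N s) (B s) : ℝ) = 0)
    (hT : ∀ s ∈ Set.Ioo a₀ b₀, HasDerivAt T (κ s • N s) s)
    (hN : ∀ s ∈ Set.Ioo a₀ b₀, HasDerivAt N (-(κ s) • T s + τ s • B s) s)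
    (hB : ∀ s ∈ Set.Ioo a₀ b₀, HasDerivAt B (-(τ s) • N s) s)
    (hratio : ∀ s ∈ Set.Ioo a₀ b₀, τ s / κ s = c₁ * s + c₂) :
    ∃ v : EuclideanSpace ℝ (Fin 3),
      ∀ s ∈ Set.Ioo a₀ b₀, (inner ℝ (σ s + v) (N s) : ℝ) = 0 := by
  classical
  set f : ℝ → EuclideanSpace ℝ (Fin 3) :=
    fun s => σ s - (s + c₂/c₁) • T s - (1/c₁) • B s with hf
  have hτ : ∀ s ∈ Set.Ioo a₀ b₀, τ s = (c₁ * s + c₂) * κ s := by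
    intro s hs
    have hk := (hκ s hs).ne'
    have := hratio s hs
    field_simp at this
    linarith [this]
  have hderiv : ∀ s ∈ Set.Ioo a₀ b₀, HasDerivAt f 0 s := by
    intro s hs
    have h1 : HasDerivAt (fun u : ℝ => (u + c₂/c₁) • T u)
        ((s + c₂/c₁) • (κ s • N s) + (1:ℝ) • T s) s :=
      (((hasDerivAt_id s).add_const (c₂/c₁))).smul (hT s hs)
    have h2 : HasDerivAt (fun u : ℝ => (1/c₁) • B u)
        ((1/c₁) • (-(τ s) • N s)) s := (hB s hs).const_smul (1/c₁)
    have h3 := ((hσ s hs).sub h1).sub h2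
    have heq : T s - ((s + c₂/c₁) • (κ s • N s) + (1:ℝ) • T s)
        - (1/c₁) • (-(τ s) • N s) = 0 := by
      have hτs := hτ s hs
      have hcomb : T s - ((s + c₂/c₁) • (κ s • N s) + (1:ℝ) • T s)
          - (1/c₁) • (-(τ s) • N s)
          = ((1/c₁) * τ s - (s + c₂/c₁) * κ s) • N s := by module
      rw [hcomb, hτs]
      have : (1/c₁) * ((c₁ * s + c₂) * κ s) - (s + c₂/c₁) * κ s = 0 := by
        field_simp; ring
      rw [this, zero_smul]
    rw [heq] at h3
    exact h3
  -- f is constant on the open interval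
  have hconv : Convex ℝ (Set.Ioo a₀ b₀) := convex_Ioo a₀ b₀
  set s₀ : ℝ := (a₀ + b₀) / 2 with hs₀def
  have hs₀ : s₀ ∈ Set.Ioo a₀ b₀ := ⟨by linarith, by linarith⟩
  have hconst : ∀ s ∈ Set.Ioo a₀ b₀, f s = f s₀ := by
    intro s hs
    have := hconv.norm_image_sub_le_of_norm_hasDerivWithin_le
      (f' := fun _ => (0 : EuclideanSpace ℝ (Fin 3))) (C := 0)
      (fun x hx => (hderiv x hx).hasDerivWithinAt)
      (fun x _ => by simp) hs₀ hs
    have h0 : ‖f s - f s₀‖ ≤ 0 := by simpa using this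
    have := le_antisymm h0 (norm_nonneg _)
    exact sub_eq_zero.mp (norm_eq_zero.mp this)
  refine ⟨-(f s₀), fun s hs => ?_⟩
  have hfs := hconst s hs
  have hrepr : σ s + -(f s₀) = (s + c₂/c₁) • T s + (1/c₁) • B s := by
    rw [← hfs, hf]; beta_reduce; abel
  rw [hrepr, inner_add_left, real_inner_smul_left, real_inner_smul_left,
    hTN s hs, real_inner_comm, hNB s hs]
  ring
end

section
/- Let λ ≠ 0, a ≠ 0, b ∈ ℝ, d = 0, and let σ(s) be the whirl-rectifying curve and w(t) the unit-sphere curve as defined above. Setting t(s) = arctan(b+as) and u(s) = √(1+(b+as)²)/|a|, one has u(s)·w(t(s)) = σ(s) for all s with as+b ≠ 0; hence σ lies on the cone {u·w(t) : u > 0}. -/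
/-- A point of `ℝ³` as Euclidean space. -/
noncomputable def V3 (x y z : ℝ) : EuclideanSpace ℝ (Fin 3) :=
  (WithLp.equiv 2 (Fin 3 → ℝ)).symm ![x, y, z]

/-- with `t(s) = arctan(b+as)` and `u(s) = √(1+(b+as)²)/|a|`, one
has `u(s) • w(t(s)) = σ(s)` whenever `as + b ≠ 0`; hence the whirl-rectifying
curve `σ` lies on the cone `{u • w(t) : u > 0}`. -/
theorem whirl_rectifying_on_cone
    (lam a b : ℝ) (hlam : lam ≠ 0) (ha : a ≠ 0)
    (φ ψ : ℝ → ℝ)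
    (hφ : ∀ s, φ s = artanh (Real.sqrt ((1 + lam ^ 2) /
        (1 + (b + a * s) ^ 2 + lam ^ 2))) / lam)
    (hψ : ∀ t, ψ t = artanh (Real.sqrt (1 + lam ^ 2) /
        Real.sqrt (1 + Real.tan t ^ 2 + lam ^ 2)) / lam)
    (σ : ℝ → EuclideanSpace ℝ (Fin 3))
    (hσ : ∀ s, σ s = V3
      (((b + a * s) / a) * (lam / Real.sqrt (1 + lam ^ 2)) * Real.cos (φ s))
      (-(((b + a * s) / a) * (lam / Real.sqrt (1 + lam ^ 2)) * Real.sin (φ s)))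
      ((1 / a) * (Real.sqrt (1 + (b + a * s) ^ 2 + lam ^ 2) / Real.sqrt (1 + lam ^ 2))))
    (w : ℝ → EuclideanSpace ℝ (Fin 3))
    (hw : ∀ t, w t = V3
      ((|a| / a) * (lam / Real.sqrt (1 + lam ^ 2)) * Real.sin t * Real.cos (ψ t))
      (-((|a| / a) * (lam / Real.sqrt (1 + lam ^ 2)) * Real.sin t * Real.sin (ψ t)))
      ((|a| / a) * Real.cos t *
        (Real.sqrt (1 + Real.tan t ^ 2 + lam ^ 2) / Real.sqrt (1 + lam ^ 2)))) :
    (∀ s : ℝ, a * s + b ≠ 0 →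
      (Real.sqrt (1 + (b + a * s) ^ 2) / |a|) • w (Real.arctan (b + a * s)) = σ s) ∧
    ∀ s : ℝ, a * s + b ≠ 0 → σ s ∈ {p : EuclideanSpace ℝ (Fin 3) |
      ∃ u t : ℝ, 0 < u ∧ p = u • w t} := by
  have key : ∀ s : ℝ,
      (Real.sqrt (1 + (b + a * s) ^ 2) / |a|) • w (Real.arctan (b + a * s)) = σ s := by
    intro s
    have h1 : (0:ℝ) < 1 + (b + a * s) ^ 2 := by positivity
    have hs1 : (0:ℝ) < Real.sqrt (1 + (b + a * s) ^ 2) := Real.sqrt_pos.mpr h1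
    have ha' : |a| ≠ 0 := abs_ne_zero.mpr ha
    have heq : Real.sqrt ((1 + lam ^ 2) / (1 + (b + a * s) ^ 2 + lam ^ 2)) =
        Real.sqrt (1 + lam ^ 2) / Real.sqrt (1 + (b + a * s) ^ 2 + lam ^ 2) :=
      Real.sqrt_div (by positivity) _
    rw [hw, hσ, hψ, hφ, Real.tan_arctan, Real.cos_arctan, Real.sin_arctan, heq]
    ext i
    fin_cases i <;>
      simp [V3, PiLp.smul_apply, smul_eq_mul] <;>
      field_simp <;> ring
  refine ⟨fun s _ => key s, fun s _ => ?_⟩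
  exact ⟨Real.sqrt (1 + (b + a * s) ^ 2) / |a|, Real.arctan (b + a * s),
    div_pos (Real.sqrt_pos.mpr (by positivity)) (abs_pos.mpr ha), (key s).symm⟩
end
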